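/- Let Λ^{(i)} = a^{(i)} a^{(i)T} and Γ^{(i)} = g^{(i)} g^{(i)T} be nonzero rank-one PSD matrices for i = 1,…,N, and set F = (1/N)Σ_i Λ^{(i)} ⊗ Γ^{(i)} and F_TKFAC = (Σ_i tr(Γ^{(i)})Λ^{(i)}) ⊗ (Σ_i tr(Λ^{(i)})Γ^{(i)}) / (N·Σ_i tr(Λ^{(i)})tr(Γ^{(i)})). Then ‖F − F_TKFAC‖_F ≤ (2(N−1)/N)·max_{i<j} √(tr(Λ^{(i)}) tr(Λ^{(j)}) tr(Γ^{(i)}) tr(Γ^{(j)})). -/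
import Mathlib

open Matrix Kronecker

/-- Frobenius norm of a real matrix. -/
noncomputable def frob {m n : Type*} [Fintype m] [Fintype n]
    (A : Matrix m n ℝ) : ℝ :=
  Real.sqrt (∑ i, ∑ j, A i j ^ 2)

section Aux

attribute [local instance] Matrix.frobeniusSeminormedAddCommGroup Matrix.frobeniusNormedSpace

variable {m n : Type*} [Fintype m] [Fintype n]

lemma frob_eq_norm (A : Matrix m n ℝ) : frob A = ‖A‖ := by
  rw [frob, Matrix.frobenius_norm_def, Real.sqrt_eq_rpow]
  congr 1
  refine Finset.sum_congr rfl fun i _ => Finset.sum_congr rfl fun j _ => ?_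
  rw [Real.norm_eq_abs, Real.rpow_two, sq_abs]

lemma frob_smul (c : ℝ) (A : Matrix m n ℝ) : frob (c • A) = |c| * frob A := by
  rw [frob_eq_norm, frob_eq_norm, norm_smul, Real.norm_eq_abs]

lemma frob_sub_le (A B : Matrix m n ℝ) : frob (A - B) ≤ frob A + frob B := by
  rw [frob_eq_norm, frob_eq_norm, frob_eq_norm]; exact norm_sub_le A B

lemma frob_sum_le {ι : Type*} (s : Finset ι) (f : ι → Matrix m n ℝ) :
    frob (∑ i ∈ s, f i) ≤ ∑ i ∈ s, frob (f i) := by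
  simp only [frob_eq_norm]; exact norm_sum_le s f

lemma frob_zero : frob (0 : Matrix m n ℝ) = 0 := by
  rw [frob_eq_norm]; exact norm_zero

lemma frob_vecMulVec_self (u : m → ℝ) : frob (vecMulVec u u) = ∑ i, u i ^ 2 := by
  have h : ∑ i, ∑ j, (vecMulVec u u) i j ^ 2 = (∑ i, u i ^ 2) * (∑ i, u i ^ 2) := by
    rw [Finset.sum_mul_sum]
    refine Finset.sum_congr rfl fun i _ => Finset.sum_congr rfl fun j _ => ?_
    rw [vecMulVec_apply]; ring
  rw [frob, h, ← sq, Real.sqrt_sq (by positivity)]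

lemma kron_vecMulVec (u : m → ℝ) (v : n → ℝ) :
    (vecMulVec u u) ⊗ₖ (vecMulVec v v) =
      vecMulVec (fun p : m × n => u p.1 * v p.2) (fun p : m × n => u p.1 * v p.2) := by
  ext ⟨p, r⟩ ⟨s, t⟩
  simp [vecMulVec_apply, kroneckerMap_apply]
  ring

lemma frob_kron_vecMulVec (u : m → ℝ) (v : n → ℝ) :
    frob ((vecMulVec u u) ⊗ₖ (vecMulVec v v)) = (∑ i, u i ^ 2) * (∑ i, v i ^ 2) := by
  rw [kron_vecMulVec, frob_vecMulVec_self, Fintype.sum_prod_type, Finset.sum_mul_sum]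
  refine Finset.sum_congr rfl fun i _ => Finset.sum_congr rfl fun j _ => ?_
  ring

end Aux

theorem tkfac_approximation_error (m q N : ℕ) (hN : 2 ≤ N)
    (a : Fin N → Fin m → ℝ) (g : Fin N → Fin q → ℝ)
    (ha : ∀ i, a i ≠ 0) (hg : ∀ i, g i ≠ 0)
    (Λ : Fin N → Matrix (Fin m) (Fin m) ℝ) (Γ : Fin N → Matrix (Fin q) (Fin q) ℝ)
    (hΛ : ∀ i, Λ i = vecMulVec (a i) (a i)) (hΓ : ∀ i, Γ i = vecMulVec (g i) (g i))
    (F Ftkfac : Matrix (Fin m × Fin q) (Fin m × Fin q) ℝ)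
    (hF : F = (N : ℝ)⁻¹ • ∑ i, (Λ i) ⊗ₖ (Γ i))
    (hFt : Ftkfac = ((N : ℝ) * ∑ i, (Λ i).trace * (Γ i).trace)⁻¹ •
      ((∑ i, (Γ i).trace • Λ i) ⊗ₖ (∑ i, (Λ i).trace • Γ i))) :
    frob (F - Ftkfac) ≤
      (2 * (N - 1 : ℝ) / N) *
        (Finset.univ.filter (fun p : Fin N × Fin N => p.1 < p.2)).sup'
          ⟨(⟨0, by omega⟩, ⟨1, by omega⟩), by
            refine Finset.mem_filter.mpr ⟨Finset.mem_univ _, ?_⟩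
            exact Fin.mk_lt_mk.mpr Nat.zero_lt_one⟩
          (fun p => Real.sqrt ((Λ p.1).trace * (Λ p.2).trace *
            (Γ p.1).trace * (Γ p.2).trace)) := by
  -- abbreviations
  set α : Fin N → ℝ := fun i => (Λ i).trace with hαdef
  set β : Fin N → ℝ := fun i => (Γ i).trace with hβdef
  have hαeq : ∀ i, α i = ∑ p, a i p ^ 2 := by
    intro i
    simp only [hαdef, hΛ i, Matrix.trace, Matrix.diag, vecMulVec_apply]
    exact Finset.sum_congr rfl fun p _ => (sq (a i p)).symm
  have hβeq : ∀ i, β i = ∑ p, g i p ^ 2 := by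
    intro i
    simp only [hβdef, hΓ i, Matrix.trace, Matrix.diag, vecMulVec_apply]
    exact Finset.sum_congr rfl fun p _ => (sq (g i p)).symm
  have hαpos : ∀ i, 0 < α i := by
    intro i
    rw [hαeq i]
    obtain ⟨p, hp⟩ := Function.ne_iff.mp (ha i)
    exact Finset.sum_pos' (fun _ _ => sq_nonneg _)
      ⟨p, Finset.mem_univ p, pow_two_pos_of_ne_zero hp⟩
  have hβpos : ∀ i, 0 < β i := by
    intro i
    rw [hβeq i]
    obtain ⟨p, hp⟩ := Function.ne_iff.mp (hg i)
    exact Finset.sum_pos' (fun _ _ => sq_nonneg _)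
      ⟨p, Finset.mem_univ p, pow_two_pos_of_ne_zero hp⟩
  set S : ℝ := ∑ i, α i * β i with hSdef
  haveI : Nonempty (Fin N) := ⟨⟨0, by omega⟩⟩
  have hS : 0 < S :=
    Finset.sum_pos (fun i _ => mul_pos (hαpos i) (hβpos i)) Finset.univ_nonempty
  have hNpos : (0 : ℝ) < N := by positivity
  set c : ℝ := ((N : ℝ) * S)⁻¹ with hcdef
  have hc : 0 < c := by positivity
  -- frobenius norms of kronecker products
  have hfrobK : ∀ i j, frob ((Λ i) ⊗ₖ (Γ j)) = α i * β j := by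
    intro i j
    rw [hΛ i, hΓ j, frob_kron_vecMulVec, ← hαeq i, ← hβeq j]
  -- the sup
  set M : ℝ := (Finset.univ.filter (fun p : Fin N × Fin N => p.1 < p.2)).sup'
      ⟨(⟨0, by omega⟩, ⟨1, by omega⟩), by
        refine Finset.mem_filter.mpr ⟨Finset.mem_univ _, ?_⟩
        exact Fin.mk_lt_mk.mpr Nat.zero_lt_one⟩
      (fun p => Real.sqrt ((Λ p.1).trace * (Λ p.2).trace *
        (Γ p.1).trace * (Γ p.2).trace)) with hMdef
  have hMle : ∀ i j, i ≠ j → Real.sqrt (α i * α j * β i * β j) ≤ M := by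
    intro i j hij
    rcases lt_or_gt_of_ne hij with h | h
    · have hmem : (i, j) ∈ Finset.univ.filter (fun p : Fin N × Fin N => p.1 < p.2) := by
        simp [h]
      exact Finset.le_sup'
        (fun p : Fin N × Fin N => Real.sqrt ((Λ p.1).trace * (Λ p.2).trace *
          (Γ p.1).trace * (Γ p.2).trace)) hmem
    · have hmem : (j, i) ∈ Finset.univ.filter (fun p : Fin N × Fin N => p.1 < p.2) := by
        simp [h]
      have := Finset.le_sup'
        (fun p : Fin N × Fin N => Real.sqrt ((Λ p.1).trace * (Λ p.2).trace *
          (Γ p.1).trace * (Γ p.2).trace)) hmem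
      calc Real.sqrt (α i * α j * β i * β j)
          = Real.sqrt (α j * α i * β j * β i) := by ring_nf
        _ ≤ M := this
  have hM0 : 0 ≤ M := by
    have h01 : (⟨0, by omega⟩ : Fin N) ≠ (⟨1, by omega⟩ : Fin N) := by
      simp [Fin.ext_iff]
    exact le_trans (Real.sqrt_nonneg _) (hMle _ _ h01)
  -- key identity
  have hkron2 : (∑ i, β i • Λ i) ⊗ₖ (∑ j, α j • Γ j) =
      ∑ i, ∑ j, (α j * β i) • ((Λ i) ⊗ₖ (Γ j)) := by
    ext ⟨p, r⟩ ⟨s, t⟩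
    simp only [kroneckerMap_apply, Matrix.sum_apply, Matrix.smul_apply, smul_eq_mul]
    rw [Finset.sum_mul_sum]
    refine Finset.sum_congr rfl fun i _ => Finset.sum_congr rfl fun j _ => ?_
    ring
  have key : F - Ftkfac =
      c • ∑ i, ∑ j, ((α j * β j) • ((Λ i) ⊗ₖ (Γ i)) - (α j * β i) • ((Λ i) ⊗ₖ (Γ j))) := by
    have hNinv : (N : ℝ)⁻¹ = c * S := by
      rw [hcdef, mul_inv]
      field_simp
    have expand : ∑ i, ∑ j, ((α j * β j) • ((Λ i) ⊗ₖ (Γ i)) - (α j * β i) • ((Λ i) ⊗ₖ (Γ j)))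
        = S • (∑ i, (Λ i) ⊗ₖ (Γ i)) - ∑ i, ∑ j, (α j * β i) • ((Λ i) ⊗ₖ (Γ j)) := by
      simp only [Finset.sum_sub_distrib]
      congr 1
      rw [Finset.smul_sum]
      refine Finset.sum_congr rfl fun i _ => ?_
      rw [← Finset.sum_smul]
    rw [hF, hFt, hkron2, hNinv, expand, smul_sub, smul_smul]
  -- per-term bound
  have hterm : ∀ i j,
      frob ((α j * β j) • ((Λ i) ⊗ₖ (Γ i)) - (α j * β i) • ((Λ i) ⊗ₖ (Γ j))) ≤
        (if i = j then 0 else M * (α i * β i + α j * β j)) := by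
    intro i j
    by_cases hij : i = j
    · subst hij
      simp [sub_self, frob_zero]
    · rw [if_neg hij]
      have h1 : frob ((α j * β j) • ((Λ i) ⊗ₖ (Γ i)) - (α j * β i) • ((Λ i) ⊗ₖ (Γ j)))
          ≤ 2 * (α i * α j * β i * β j) := by
        refine le_trans (frob_sub_le _ _) ?_
        rw [frob_smul, frob_smul, hfrobK, hfrobK,
          abs_of_pos (mul_pos (hαpos j) (hβpos j)),
          abs_of_pos (mul_pos (hαpos j) (hβpos i))]
        nlinarith [hαpos i, hαpos j, hβpos i, hβpos j]
      refine le_trans h1 ?_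
      have hsq := hMle i j hij
      have hx : (0:ℝ) ≤ α i * β i := le_of_lt (mul_pos (hαpos i) (hβpos i))
      have hy : (0:ℝ) ≤ α j * β j := le_of_lt (mul_pos (hαpos j) (hβpos j))
      have hxy : α i * α j * β i * β j = (α i * β i) * (α j * β j) := by ring
      have h2 : Real.sqrt (α i * α j * β i * β j) ^ 2 = α i * α j * β i * β j :=
        Real.sq_sqrt (by nlinarith)
      have h3 : 2 * Real.sqrt (α i * α j * β i * β j) ≤ α i * β i + α j * β j := by
        have h4 : Real.sqrt (α i * α j * β i * β j)
            = Real.sqrt (α i * β i) * Real.sqrt (α j * β j) := by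
          rw [hxy, Real.sqrt_mul hx]
        rw [h4]
        nlinarith [sq_nonneg (Real.sqrt (α i * β i) - Real.sqrt (α j * β j)),
          Real.sq_sqrt hx, Real.sq_sqrt hy]
      nlinarith [Real.sqrt_nonneg (α i * α j * β i * β j)]
  -- sum of bounds
  have hsumB : ∑ i, ∑ j, (if i = j then (0:ℝ) else M * (α i * β i + α j * β j))
      = M * (2 * ((N:ℝ) - 1) * S) := by
    have hrow : ∀ i : Fin N, ∑ j, (if i = j then (0:ℝ) else M * (α i * β i + α j * β j))
        = M * ((N : ℝ) * (α i * β i) + S) - M * (2 * (α i * β i)) := by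
      intro i
      have : ∀ j : Fin N, (if i = j then (0:ℝ) else M * (α i * β i + α j * β j))
          = M * (α i * β i + α j * β j) - (if i = j then M * (α i * β i + α j * β j) else 0) := by
        intro j; by_cases h : i = j <;> simp [h]
      simp only [this, Finset.sum_sub_distrib, Finset.sum_ite_eq, Finset.mem_univ, if_pos]
      rw [← Finset.mul_sum, Finset.sum_add_distrib, Finset.sum_const, Finset.card_univ,
        Fintype.card_fin, nsmul_eq_mul, ← hSdef]
      ring
    rw [Finset.sum_congr rfl fun i _ => hrow i]
    have hsplit : ∀ i : Fin N, M * ((N:ℝ) * (α i * β i) + S) - M * (2 * (α i * β i))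
        = (M * (N:ℝ) - 2 * M) * (α i * β i) + M * S := by intro i; ring
    rw [Finset.sum_congr rfl fun i _ => hsplit i, Finset.sum_add_distrib, ← Finset.mul_sum,
      ← hSdef, Finset.sum_const, Finset.card_univ, Fintype.card_fin, nsmul_eq_mul]
    ring
  calc frob (F - Ftkfac)
      = c * frob (∑ i, ∑ j, ((α j * β j) • ((Λ i) ⊗ₖ (Γ i)) - (α j * β i) • ((Λ i) ⊗ₖ (Γ j)))) := by
        rw [key, frob_smul, abs_of_pos hc]
    _ ≤ c * ∑ i, ∑ j, frob ((α j * β j) • ((Λ i) ⊗ₖ (Γ i)) - (α j * β i) • ((Λ i) ⊗ₖ (Γ j))) := by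
        refine mul_le_mul_of_nonneg_left ?_ (le_of_lt hc)
        refine le_trans (frob_sum_le _ _) (Finset.sum_le_sum fun i _ => frob_sum_le _ _)
    _ ≤ c * ∑ i, ∑ j, (if i = j then (0:ℝ) else M * (α i * β i + α j * β j)) := by
        refine mul_le_mul_of_nonneg_left ?_ (le_of_lt hc)
        exact Finset.sum_le_sum fun i _ => Finset.sum_le_sum fun j _ => hterm i j
    _ = c * (M * (2 * ((N:ℝ) - 1) * S)) := by rw [hsumB]
    _ = (2 * ((N:ℝ) - 1) / N) * M := by
        rw [hcdef]
        field_simp
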